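/- The shift space Z ⊆ {0,1}^ℤ defined by forbidding 0^m 1 0^m 1 for all m > 0, and 1 0ⁿ 1 1 and 1 0ⁿ 1 0^{n+2} for all n ≥ 0, is countable: it consists exactly of the shift-orbit of the configuration z with strictly increasing gaps between 1s, the shift-orbit of the configuration with a single 1, and the all-zero configuration. -/

import Mathlib

/-- The word `p` occurs in the configuration `x` (at some position). -/
def occursIn {A : Type*} (p : List A) (x : ℤ → A) : Prop :=
  ∃ i : ℤ, ∀ j : Fin p.length, x (i + (j : ℕ)) = p.get j

/-- The forbidden words `0^m 1 0^m 1` (m > 0), `1 0^n 1 1` and `1 0^n 1 0^(n+2)` (n ≥ 0). -/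
def Forb : Set (List Bool) :=
  {w | ∃ m : ℕ, 0 < m ∧
      w = List.replicate m false ++ [true] ++ List.replicate m false ++ [true]} ∪
  {w | ∃ n : ℕ, w = [true] ++ List.replicate n false ++ [true, true]} ∪
  {w | ∃ n : ℕ, w = [true] ++ List.replicate n false ++ [true] ++ List.replicate (n + 2) false}

/-- The shift space defined by the forbidden words `Forb`. -/
def Zspace : Set (ℤ → Bool) := {x | ∀ w ∈ Forb, ¬ occursIn w x}

attribute [local instance] Classical.propDecidable

/-- The configuration with `1`s exactly at the triangular numbers: strictly
increasing gaps 0, 1, 2, 3, … between consecutive `1`s. -/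
noncomputable def zConf : ℤ → Bool := fun n =>
  if ∃ k : ℕ, n = (k * (k + 1) / 2 : ℕ) then true else false

/-!
Call a one at `p` followed by exactly `n` zeros and then a one a gap of length `n` at `p`
(`HasGap`). In a configuration of `Zspace` a gap of length `n` is always followed by one of
length exactly `n + 1`: `1 0ⁿ 1 1` rules out length `0`, `1 0ⁿ 1 0ⁿ⁺²` rules out lengths
beyond `n + 1`, and `0ᵐ 1 0ᵐ 1` rules out lengths `1 ≤ m ≤ n`, the gap of length `n` supplying
the leading `0ᵐ`. Read leftwards, gaps shrink by one at each step, so a configuration with a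
one has a leftmost one `a`; the gap after it has length `0` (again by `0ᵐ 1 0ᵐ 1`), and from
there on the ones are exactly the points `a + k (k + 1) / 2`. Conversely the three families
avoid the forbidden words, and each is countable.
-/

open Set

section Words

variable {A : Type*}

def MatchesAt (w : List A) (x : ℤ → A) (i : ℤ) : Prop :=
  ∀ j : Fin w.length, x (i + (j : ℕ)) = w.get j

@[simp]
theorem matchesAt_nil (x : ℤ → A) (i : ℤ) : MatchesAt [] x i := fun j => j.elim0

@[simp]
theorem matchesAt_cons {a : A} {w : List A} {x : ℤ → A} {i : ℤ} :
    MatchesAt (a :: w) x i ↔ x i = a ∧ MatchesAt w x (i + 1) := by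
  simp only [MatchesAt, List.length_cons, Fin.forall_fin_succ, Fin.val_zero, Fin.val_succ,
    List.get_eq_getElem, List.getElem_cons_zero, List.getElem_cons_succ]
  push_cast
  simp only [add_zero, add_assoc, add_comm (1 : ℤ)]

@[simp]
theorem matchesAt_append {v w : List A} {x : ℤ → A} {i : ℤ} :
    MatchesAt (v ++ w) x i ↔ MatchesAt v x i ∧ MatchesAt w x (i + v.length) := by
  induction v generalizing i with
  | nil => simp
  | cons a v ih =>
    simp only [List.cons_append, matchesAt_cons, ih, List.length_cons]
    push_cast
    simp only [and_assoc, add_assoc, add_comm (1 : ℤ)]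

@[simp]
theorem matchesAt_replicate {n : ℕ} {a : A} {x : ℤ → A} {i : ℤ} :
    MatchesAt (List.replicate n a) x i ↔ ∀ k ∈ Ico i (i + n), x k = a := by
  simp only [MatchesAt, List.get_eq_getElem, List.getElem_replicate, mem_Ico]
  refine ⟨fun h k hk => ?_, fun h j => h _ ⟨by omega, by simpa using j.isLt⟩⟩
  obtain ⟨j, rfl⟩ : ∃ j : ℕ, k = i + j := ⟨(k - i).toNat, by omega⟩
  exact h ⟨j, by simp; omega⟩

theorem occursIn_iff_exists_matchesAt {w : List A} {x : ℤ → A} :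
    occursIn w x ↔ ∃ i, MatchesAt w x i := Iff.rfl

theorem occursIn_comp_add_right {w : List A} {x : ℤ → A} (c : ℤ) :
    occursIn w (fun n => x (n + c)) ↔ occursIn w x := by
  simp only [occursIn_iff_exists_matchesAt, MatchesAt, add_right_comm _ _ c]
  exact ⟨fun ⟨i, h⟩ => ⟨i + c, h⟩, fun ⟨i, h⟩ => ⟨i - c, by simpa using h⟩⟩

end Words

def triangle (k : ℕ) : ℕ := k * (k + 1) / 2

theorem triangle_succ (k : ℕ) : triangle (k + 1) = triangle k + (k + 1) := by
  have h₁ := (Nat.even_mul_succ_self k).two_dvd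
  have h₂ := (Nat.even_mul_succ_self (k + 1)).two_dvd
  have : (k + 1) * (k + 1 + 1) = k * (k + 1) + 2 * (k + 1) := by ring
  unfold triangle
  omega

theorem triangle_strictMono : StrictMono triangle :=
  strictMono_nat_of_lt_succ fun k => by rw [triangle_succ]; omega

theorem exists_triangle_le_lt (m : ℕ) : ∃ k, triangle k ≤ m ∧ m < triangle (k + 1) := by
  induction m with
  | zero => exact ⟨0, le_rfl, by simp [triangle]⟩
  | succ m ih =>
    obtain ⟨k, hk, hmk⟩ := ih
    by_cases h : m + 1 < triangle (k + 1)
    · exact ⟨k, by omega, h⟩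
    · have := triangle_succ (k + 1)
      exact ⟨k + 1, by omega, by omega⟩

def HasGap (x : ℤ → Bool) (p : ℤ) (n : ℕ) : Prop :=
  x p = true ∧ (∀ k ∈ Ioo p (p + n + 1), x k = false) ∧ x (p + n + 1) = true

section Gaps

variable {x : ℤ → Bool} {p q : ℤ} {m n : ℕ}

theorem matchesAt_oneZerosOne_iff :
    MatchesAt ([true] ++ List.replicate n false ++ [true]) x p ↔ HasGap x p n := by
  simp only [HasGap, matchesAt_append, matchesAt_cons, matchesAt_nil, matchesAt_replicate,
    List.length_append, List.length_replicate, List.length_singleton, mem_Ico, mem_Ioo, and_true]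
  rw [show p + ↑(1 + n) = p + n + 1 by push_cast; ring]
  exact ⟨fun ⟨⟨h₀, h⟩, h₁⟩ => ⟨h₀, fun k hk => h k ⟨by omega, by omega⟩, h₁⟩,
    fun ⟨h₀, h, h₁⟩ => ⟨⟨h₀, fun k hk => h k ⟨by omega, by omega⟩⟩, h₁⟩⟩

theorem occursIn_zerosOneZerosOne_iff :
    occursIn (List.replicate m false ++ [true] ++ List.replicate m false ++ [true]) x ↔
      ∃ p : ℤ, (∀ k ∈ Ico (p - m) p, x k = false) ∧ HasGap x p m := by
  rw [occursIn_iff_exists_matchesAt, show List.replicate m false ++ [true] ++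
    List.replicate m false ++ [true] = List.replicate m false ++ ([true] ++
    List.replicate m false ++ [true]) by simp]
  simp only [matchesAt_append (v := List.replicate m false), matchesAt_replicate,
    List.length_replicate, matchesAt_oneZerosOne_iff]
  exact ⟨fun ⟨i, h₀, h⟩ => ⟨i + m, by simpa using h₀, h⟩,
    fun ⟨p, h₀, h⟩ => ⟨p - m, by simpa using h₀, by simpa using h⟩⟩

theorem occursIn_oneZerosOneOne_iff :
    occursIn ([true] ++ List.replicate n false ++ [true, true]) x ↔
      ∃ p : ℤ, HasGap x p n ∧ x (p + n + 2) = true := by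
  rw [occursIn_iff_exists_matchesAt, show [true] ++ List.replicate n false ++ [true, true] =
    [true] ++ List.replicate n false ++ [true] ++ [true] by simp]
  simp only [matchesAt_append (v := [true] ++ List.replicate n false ++ [true]),
    matchesAt_oneZerosOne_iff, matchesAt_cons,
    matchesAt_nil, and_true, List.length_append, List.length_replicate, List.length_singleton]
  refine exists_congr fun p => and_congr_right' ?_
  rw [show p + ↑(1 + n + 1) = p + n + 2 by push_cast; ring]

theorem occursIn_oneZerosOneZeros_iff :
    occursIn ([true] ++ List.replicate n false ++ [true] ++ List.replicate (n + 2) false) x ↔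
      ∃ p : ℤ, HasGap x p n ∧ ∀ k ∈ Ico (p + n + 2) (p + 2 * n + 4), x k = false := by
  rw [occursIn_iff_exists_matchesAt]
  simp only [matchesAt_append (w := List.replicate (n + 2) false), matchesAt_oneZerosOne_iff,
    matchesAt_replicate, List.length_append, List.length_replicate, List.length_singleton]
  refine exists_congr fun p => and_congr_right' ?_
  rw [show p + ↑(1 + n + 1) = p + n + 2 by push_cast; ring,
    show p + n + 2 + ↑(n + 2) = p + 2 * n + 4 by push_cast; ring]

theorem HasGap.unique (hm : HasGap x p m) (hn : HasGap x p n) : m = n := by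
  obtain ⟨-, hm₀, hm₁⟩ := hm
  obtain ⟨-, hn₀, hn₁⟩ := hn
  by_contra hne
  rcases Nat.lt_or_gt_of_ne hne with h | h
  · simp [hn₀ (p + m + 1) ⟨by omega, by omega⟩] at hm₁
  · simp [hm₀ (p + n + 1) ⟨by omega, by omega⟩] at hn₁

theorem exists_hasGap_of_lt (hp : x p = true) (hq : x q = true) (hpq : p < q) :
    ∃ n, HasGap x p n := by
  obtain ⟨r, ⟨hr, hpr⟩, hmin⟩ :=
    Int.exists_least_of_bdd (P := fun r => x r = true ∧ p < r) ⟨p + 1, fun r hr => by omega⟩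
      ⟨q, hq, hpq⟩
  refine ⟨(r - p - 1).toNat, hp, fun k hk => ?_, ?_⟩
  · by_contra hk'
    have := hmin k ⟨by simpa using hk', hk.1⟩
    simp only [mem_Ioo] at hk
    omega
  · rwa [show p + (r - p - 1).toNat + 1 = r by omega]

theorem exists_hasGap_add_eq_of_lt (hp : x p = true) (hq : x q = true) (hpq : p < q) :
    ∃ r n, HasGap x r n ∧ r + n + 1 = q := by
  obtain ⟨r, ⟨hr, hrq⟩, hmax⟩ :=
    Int.exists_greatest_of_bdd (P := fun r => x r = true ∧ r < q) ⟨q - 1, fun r hr => by omega⟩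
      ⟨p, hp, hpq⟩
  refine ⟨r, (q - r - 1).toNat, ⟨hr, fun k hk => ?_, ?_⟩, by omega⟩
  · by_contra hk'
    have := hmax k ⟨by simpa using hk', by simp only [mem_Ioo] at hk; omega⟩
    simp only [mem_Ioo] at hk
    omega
  · rwa [show r + (q - r - 1).toNat + 1 = q by omega]

end Gaps

theorem mem_Zspace_iff {x : ℤ → Bool} : x ∈ Zspace ↔
    (∀ p (m : ℕ), 0 < m → HasGap x p m → ∃ k ∈ Ico (p - m) p, x k = true) ∧
    (∀ p n, HasGap x p n → x (p + n + 2) = false) ∧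
    (∀ p n, HasGap x p n → ∃ k ∈ Ico (p + n + 2) (p + 2 * n + 4), x k = true) := by
  constructor
  · intro hx
    refine ⟨fun p m hm hgap => ?_, fun p n hgap => ?_, fun p n hgap => ?_⟩
    · by_contra! h
      exact hx _ (Or.inl (Or.inl ⟨m, hm, rfl⟩))
        (occursIn_zerosOneZerosOne_iff.2 ⟨p, by simpa using h, hgap⟩)
    · by_contra h
      exact hx _ (Or.inl (Or.inr ⟨n, rfl⟩))
        (occursIn_oneZerosOneOne_iff.2 ⟨p, hgap, by simpa using h⟩)
    · by_contra! h
      exact hx _ (Or.inr ⟨n, rfl⟩) (occursIn_oneZerosOneZeros_iff.2 ⟨p, hgap, by simpa using h⟩)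
  · rintro ⟨hA, hB, hC⟩ w ((⟨m, hm, rfl⟩ | ⟨n, rfl⟩) | ⟨n, rfl⟩)
    · rw [occursIn_zerosOneZerosOne_iff]
      rintro ⟨p, hzero, hgap⟩
      obtain ⟨k, hk, hxk⟩ := hA p m hm hgap
      simp [hzero k hk] at hxk
    · rw [occursIn_oneZerosOneOne_iff]
      rintro ⟨p, hgap, hx⟩
      simp [hB p n hgap] at hx
    · rw [occursIn_oneZerosOneZeros_iff]
      rintro ⟨p, hgap, hzero⟩
      obtain ⟨k, hk, hxk⟩ := hC p n hgap
      simp [hzero k hk] at hxk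

theorem shift_mem_Zspace {x : ℤ → Bool} (hx : x ∈ Zspace) (c : ℤ) :
    (fun n => x (n + c)) ∈ Zspace :=
  fun w hw => (occursIn_comp_add_right c).not.2 (hx w hw)

theorem mem_Zspace_of_forall_not_hasGap {x : ℤ → Bool} (h : ∀ p n, ¬ HasGap x p n) :
    x ∈ Zspace :=
  mem_Zspace_iff.2 ⟨fun p m _ hg => (h p m hg).elim, fun p n hg => (h p n hg).elim,
    fun p n hg => (h p n hg).elim⟩

section Structure

variable {x : ℤ → Bool} {a b p : ℤ} {n : ℕ}

theorem HasGap.succ (hx : x ∈ Zspace) (h : HasGap x p n) : HasGap x (p + n + 1) (n + 1) := by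
  obtain ⟨hA, hB, hC⟩ := mem_Zspace_iff.1 hx
  obtain ⟨k, hk, hxk⟩ := hC p n h
  simp only [mem_Ico] at hk
  obtain ⟨m, hm⟩ := exists_hasGap_of_lt h.2.2 hxk (by omega)
  suffices m = n + 1 by rwa [← this]
  have hm_pos : 0 < m := Nat.pos_of_ne_zero fun hm₀ => by
    have h₂ : x (p + n + 2) = true := by convert hm.2.2 using 2; rw [hm₀]; push_cast; ring
    simp [hB p n h] at h₂
  have hm_ge : n + 1 ≤ m := by
    by_contra! hlt
    obtain ⟨j, hj, hxj⟩ := hA _ m hm_pos hm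
    simp only [mem_Ico] at hj
    simp [h.2.1 j ⟨by omega, by omega⟩] at hxj
  by_contra hne
  simp [hm.2.1 k ⟨by omega, by omega⟩] at hxk

theorem exists_least_eq_true (hx : x ∈ Zspace) (ha : x a = true) :
    ∃ b, x b = true ∧ ∀ k < b, x k = false := by
  by_contra! hnone
  have hprev : ∀ p, x p = true → ∃ r n, HasGap x r n ∧ r + n + 1 = p := fun p hp => by
    obtain ⟨k, hkp, hk⟩ := hnone p hp
    exact exists_hasGap_add_eq_of_lt (by simpa using hk) hp hkp
  -- every gap is preceded by a gap one shorter, and lengths cannot decrease forever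
  have hgap : ∀ n p, ¬ HasGap x p n := by
    intro n
    induction n with
    | zero =>
      intro p hp
      obtain ⟨r, n', hr, rfl⟩ := hprev p hp.1
      exact absurd ((hr.succ hx).unique hp) (by omega)
    | succ n ih =>
      intro p hp
      obtain ⟨r, n', hr, rfl⟩ := hprev p hp.1
      obtain rfl : n' = n := by have := (hr.succ hx).unique hp; omega
      exact ih r hr
  obtain ⟨r, n, hr, -⟩ := hprev a ha
  exact hgap n r hr

theorem hasGap_add_triangle (hx : x ∈ Zspace) (ha : x a = true) (hleft : ∀ k < a, x k = false)
    (hb : x b = true) (hab : a < b) (k : ℕ) : HasGap x (a + triangle k) k := by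
  induction k with
  | zero =>
    obtain ⟨n, hn⟩ := exists_hasGap_of_lt ha hb hab
    obtain rfl : n = 0 := by
      by_contra hne
      obtain ⟨j, hj, hxj⟩ := (mem_Zspace_iff.1 hx).1 a n (Nat.pos_of_ne_zero hne) hn
      simp only [mem_Ico] at hj
      simp [hleft j hj.2] at hxj
    simpa [triangle] using hn
  | succ k ih =>
    convert ih.succ hx using 1
    rw [triangle_succ]
    push_cast
    ring

theorem apply_eq_true_iff_of_hasGap_add_triangle (hleft : ∀ k < a, x k = false)
    (hgap : ∀ k, HasGap x (a + triangle k) k) {n : ℤ} :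
    x n = true ↔ ∃ k, n = a + triangle k := by
  refine ⟨fun hn => ?_, fun ⟨k, hk⟩ => hk ▸ (hgap k).1⟩
  have han : a ≤ n := by
    by_contra! h
    simp [hleft n h] at hn
  obtain ⟨k, hk, hk'⟩ := exists_triangle_le_lt (n - a).toNat
  refine ⟨k, ?_⟩
  by_contra hne
  rw [triangle_succ] at hk'
  simp [(hgap k).2.1 n ⟨by omega, by omega⟩] at hn

end Structure

theorem zConf_eq_true_iff {n : ℤ} : zConf n = true ↔ ∃ k, n = triangle k := by
  simp [zConf, triangle]

theorem hasGap_zConf_triangle (k : ℕ) : HasGap zConf (triangle k) k := by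
  refine ⟨zConf_eq_true_iff.2 ⟨k, rfl⟩, fun n hn => ?_, zConf_eq_true_iff.2 ⟨k + 1, ?_⟩⟩
  · by_contra hne
    obtain ⟨j, rfl⟩ := zConf_eq_true_iff.1 (by simpa using hne)
    simp only [mem_Ioo, Nat.cast_lt] at hn
    have h₁ := triangle_strictMono.lt_iff_lt.1 hn.1
    have h₂ : triangle j < triangle (k + 1) := by rw [triangle_succ]; omega
    have := triangle_strictMono.lt_iff_lt.1 h₂
    omega
  · rw [triangle_succ]; push_cast; ring

theorem hasGap_zConf_iff {p : ℤ} {n : ℕ} : HasGap zConf p n ↔ p = triangle n := by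
  refine ⟨fun h => ?_, fun h => h ▸ hasGap_zConf_triangle n⟩
  obtain ⟨k, rfl⟩ := zConf_eq_true_iff.1 h.1
  rw [(hasGap_zConf_triangle k).unique h]

theorem zConf_mem_Zspace : zConf ∈ Zspace := by
  refine mem_Zspace_iff.2 ⟨fun p m hm h => ?_, fun p n h => ?_, fun p n h => ?_⟩
  all_goals rw [hasGap_zConf_iff] at h; subst h
  · obtain ⟨m, rfl⟩ : ∃ k, m = k + 1 := ⟨m - 1, by omega⟩
    refine ⟨triangle m, ?_, zConf_eq_true_iff.2 ⟨m, rfl⟩⟩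
    have := triangle_succ m
    simp only [mem_Ico]; omega
  · have h := (hasGap_zConf_triangle (n + 1)).2.1 (triangle n + n + 2)
    have := triangle_succ n
    simp only [mem_Ioo] at h
    exact h ⟨by omega, by omega⟩
  · refine ⟨triangle (n + 2), ?_, zConf_eq_true_iff.2 ⟨n + 2, rfl⟩⟩
    have h₁ := triangle_succ n
    have h₂ : triangle (n + 2) = triangle (n + 1) + (n + 2) := triangle_succ (n + 1)
    simp only [mem_Ico]; omega

theorem single_mem_Zspace (c : ℤ) : (fun n : ℤ => if n = c then true else false) ∈ Zspace :=
  mem_Zspace_of_forall_not_hasGap fun p n ⟨hp, _, hq⟩ => by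
    simp only [Bool.if_false_right, Bool.and_true, decide_eq_true_eq] at hp hq
    omega

theorem zero_mem_Zspace : (fun _ : ℤ => false) ∈ Zspace :=
  mem_Zspace_of_forall_not_hasGap fun _ _ h => Bool.false_ne_true h.1

theorem Zspace_subset :
    Zspace ⊆ {x | ∃ k : ℤ, x = fun n => zConf (n + k)} ∪
        {x | ∃ k : ℤ, x = fun n => if n = k then true else false} ∪ {fun _ => false} := by
  intro x hx
  by_cases hzero : ∀ n, x n = false
  · exact Or.inr (funext hzero)
  push Not at hzero
  obtain ⟨a₀, ha₀⟩ := hzero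
  obtain ⟨a, ha, hleft⟩ := exists_least_eq_true hx (by simpa using ha₀)
  by_cases hsingle : ∀ b, x b = true → b = a
  · refine Or.inl (Or.inr ⟨a, funext fun n => ?_⟩)
    by_cases hn : n = a
    · simp [hn, ha]
    · simpa [hn] using mt (hsingle n) hn
  push Not at hsingle
  obtain ⟨b, hb, hba⟩ := hsingle
  have hab : a < b := lt_of_le_of_ne (not_lt.1 fun h => by simp [hleft b h] at hb) hba.symm
  have hgap := hasGap_add_triangle hx ha hleft hb hab
  refine Or.inl (Or.inl ⟨-a, funext fun n => Bool.eq_iff_iff.2 ?_⟩)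
  rw [apply_eq_true_iff_of_hasGap_add_triangle hleft hgap, zConf_eq_true_iff]
  exact exists_congr fun k => by omega

/-- `Zspace` consists exactly of the shift orbit of `zConf`, the orbit of the
configuration with a single `1`, and the all-zero configuration; in particular
it is countable. -/
theorem stmt_10 :
    Zspace = {x | ∃ k : ℤ, x = fun n => zConf (n + k)} ∪
        {x | ∃ k : ℤ, x = fun n => if n = k then true else false} ∪
        {fun _ => false} ∧
      Zspace.Countable := by
  have hZ : Zspace = {x | ∃ k : ℤ, x = fun n => zConf (n + k)} ∪
      {x | ∃ k : ℤ, x = fun n => if n = k then true else false} ∪ {fun _ => false} := by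
    refine Zspace_subset.antisymm ?_
    rintro x ((⟨k, rfl⟩ | ⟨k, rfl⟩) | rfl)
    · exact shift_mem_Zspace zConf_mem_Zspace k
    · exact single_mem_Zspace k
    · exact zero_mem_Zspace
  refine ⟨hZ, hZ ▸ ((countable_range fun k n => zConf (n + k)).mono ?_ |>.union
    ((countable_range fun k n => if n = k then true else false).mono ?_)).union
    (countable_singleton _)⟩
  · exact fun x ⟨k, hk⟩ => ⟨k, hk.symm⟩
  · exact fun x ⟨k, hk⟩ => ⟨k, hk.symm⟩
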